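/- Adequacy of the Hoare powerdomain semantics for the non-deterministic λY-calculus with tree constants: interpreting the base type o as the powerset of trees (ordered by inclusion), each tree constructor a of arity k as the pointwise image function (L₁,…,L_k) ↦ {a π₁ ⋯ π_k | π_i ∈ L_i}, choice as union, function types as continuous function spaces, and Y as least fixed point, one has for every closed term t of base type: ⟦t⟧ = {π | t →* π}. -/

import Mathlib

/-- Sorts (simple types): κ ::= o | κ₁ → κ₂. -/
inductive STy where
  | o : STy
  | arr : STy → STy → STy
deriving DecidableEq

/-- The sort o → ⋯ → o → o with n arguments. -/
def tyOfArity : Nat → STy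
  | 0 => .o
  | n + 1 => .arr .o (tyOfArity n)

/-- De Bruijn variables: proofs of membership of a sort in a context. -/
inductive Lk : List STy → STy → Type where
  | hd {Γ κ} : Lk (κ :: Γ) κ
  | tl {Γ κ κ'} : Lk Γ κ → Lk (κ' :: Γ) κ

/-- Intrinsically typed λY-terms over tree constructors α (with arities ar),
    with a binary non-deterministic choice +_κ and fixpoint combinators Y_κ at
    every sort. -/
inductive LTm (α : Type) (ar : α → Nat) : List STy → STy → Type where
  | var {Γ κ} : Lk Γ κ → LTm α ar Γ κ
  | lam {Γ κ₁ κ₂} : LTm α ar (κ₁ :: Γ) κ₂ → LTm α ar Γ (.arr κ₁ κ₂)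
  | app {Γ κ₁ κ₂} : LTm α ar Γ (.arr κ₁ κ₂) → LTm α ar Γ κ₁ → LTm α ar Γ κ₂
  | cht {Γ κ} : LTm α ar Γ (.arr κ (.arr κ κ))
  | fix {Γ κ} : LTm α ar Γ (.arr (.arr κ κ) κ)
  | cst {Γ} (a : α) : LTm α ar Γ (tyOfArity (ar a))

/-- Extension of a renaming under a binder. -/
def extR {Γ Δ : List STy} {κ' : STy} (f : ∀ {κ}, Lk Γ κ → Lk Δ κ) :
    ∀ {κ}, Lk (κ' :: Γ) κ → Lk (κ' :: Δ) κ
  | _, .hd => .hd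
  | _, .tl y => .tl (f y)

/-- Renaming. -/
def LTm.rename {α : Type} {ar : α → Nat} :
    ∀ {Γ Δ : List STy} {κ}, (∀ {κ'}, Lk Γ κ' → Lk Δ κ') →
      LTm α ar Γ κ → LTm α ar Δ κ
  | _, _, _, f, .var x => .var (f x)
  | _, _, _, f, .lam b => .lam (b.rename (fun {_} x => extR (fun y => f y) x))
  | _, _, _, f, .app s t => .app (s.rename f) (t.rename f)
  | _, _, _, _, .cht => .cht
  | _, _, _, _, .fix => .fix
  | _, _, _, _, .cst a => .cst a

/-- Extension of a substitution under a binder. -/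
def extS {α : Type} {ar : α → Nat} {Γ Δ : List STy} {κ' : STy}
    (σ : ∀ {κ}, Lk Γ κ → LTm α ar Δ κ) :
    ∀ {κ}, Lk (κ' :: Γ) κ → LTm α ar (κ' :: Δ) κ
  | _, .hd => .var .hd
  | _, .tl y => (σ y).rename (fun z => .tl z)

/-- Simultaneous substitution. -/
def LTm.subs {α : Type} {ar : α → Nat} :
    ∀ {Γ Δ : List STy} {κ}, (∀ {κ'}, Lk Γ κ' → LTm α ar Δ κ') →
      LTm α ar Γ κ → LTm α ar Δ κ
  | _, _, _, σ, .var x => σ x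
  | _, _, _, σ, .lam b => .lam (b.subs (fun {_} x => extS (fun y => σ y) x))
  | _, _, _, σ, .app s t => .app (s.subs σ) (t.subs σ)
  | _, _, _, _, .cht => .cht
  | _, _, _, _, .fix => .fix
  | _, _, _, _, .cst a => .cst a

/-- The substitution sending the last-bound variable to t. -/
def varCase {α : Type} {ar : α → Nat} {Γ : List STy} {κ₁ : STy}
    (t : LTm α ar Γ κ₁) : ∀ {κ}, Lk (κ₁ :: Γ) κ → LTm α ar Γ κ
  | _, .hd => t
  | _, .tl y => .var y

/-- Substitution of a single term for the last-bound variable. -/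
def subst1 {α : Type} {ar : α → Nat} {Γ : List STy} {κ₁ κ₂ : STy}
    (t : LTm α ar Γ κ₁) (b : LTm α ar (κ₁ :: Γ) κ₂) : LTm α ar Γ κ₂ :=
  b.subs (fun {_} x => varCase t x)

/-- The head of the term is a tree constructor. -/
inductive ConstHead {α : Type} {ar : α → Nat} :
    ∀ {Γ κ}, LTm α ar Γ κ → Prop where
  | cst {Γ a} : ConstHead (Γ := Γ) (.cst a)
  | app {Γ κ₁ κ₂} {s : LTm α ar Γ (.arr κ₁ κ₂)} {t} :
      ConstHead s → ConstHead (.app s t)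

/-- Call-by-name non-deterministic reduction of closed λY-terms: β-reduction,
    Y f → f (Y f), resolution of choices, reduction of the head, and reduction
    of the arguments of a tree constructor. -/
inductive LRed {α : Type} {ar : α → Nat} :
    ∀ {κ}, LTm α ar [] κ → LTm α ar [] κ → Prop where
  | beta {κ₁ κ₂} {b : LTm α ar [κ₁] κ₂} {t} :
      LRed (.app (.lam b) t) (subst1 t b)
  | fixR {κ} {f : LTm α ar [] (.arr κ κ)} :
      LRed (.app .fix f) (.app f (.app .fix f))
  | chL {κ} {s t : LTm α ar [] κ} : LRed (.app (.app .cht s) t) s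
  | chR {κ} {s t : LTm α ar [] κ} : LRed (.app (.app .cht s) t) t
  | appL {κ₁ κ₂} {s s' : LTm α ar [] (.arr κ₁ κ₂)} {t} :
      LRed s s' → LRed (.app s t) (.app s' t)
  | appR {κ₁ κ₂} {s : LTm α ar [] (.arr κ₁ κ₂)} {t t'} :
      ConstHead s → LRed t t' → LRed (.app s t) (.app s t')

/-- Many-step reduction. -/
def LRedStar {α : Type} {ar : α → Nat} {κ : STy} :
    LTm α ar [] κ → LTm α ar [] κ → Prop :=
  Relation.ReflTransGen LRed

/-- Trees over the ranked alphabet (α, ar). -/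
inductive GTree (α : Type) (ar : α → Nat) : Type where
  | mk (a : α) (f : Fin (ar a) → GTree α ar)

/-- Full application of a term of sort o^n → o to n arguments. -/
def appN {α : Type} {ar : α → Nat} :
    ∀ n, LTm α ar [] (tyOfArity n) → (Fin n → LTm α ar [] .o) →
      LTm α ar [] .o
  | 0, t, _ => t
  | n + 1, t, f => appN n (.app t (f 0)) (fun i => f i.succ)

/-- A tree as a closed term of base sort. -/
def GTree.toTm {α : Type} {ar : α → Nat} : GTree α ar → LTm α ar [] .o
  | .mk a f => appN (ar a) (.cst a) (fun i => (f i).toTm)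

/-- The Hoare-powerdomain semantics of sorts: the base sort denotes the
    powerset of trees ordered by inclusion, and arrows denote function
    spaces (ordered pointwise). -/
def Sem (α : Type) (ar : α → Nat) : STy → Type
  | .o => Set (GTree α ar)
  | .arr a b => Sem α ar a → Sem α ar b

noncomputable def semCL (α : Type) (ar : α → Nat) :
    ∀ κ, CompleteLattice (Sem α ar κ)
  | .o => inferInstanceAs (CompleteLattice (Set (GTree α ar)))
  | .arr a b =>
      letI := semCL α ar b
      @Pi.instCompleteLattice (Sem α ar a) (fun _ => Sem α ar b) (fun _ => semCL α ar b)

noncomputable instance {α : Type} {ar : α → Nat} (κ : STy) :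
    CompleteLattice (Sem α ar κ) := semCL α ar κ

/-- The interpretation of a tree constructor of arity n as an iterated
    function, given its action on n sets of trees. -/
def mkConst {α : Type} {ar : α → Nat} :
    ∀ n, ((Fin n → Set (GTree α ar)) → Set (GTree α ar)) →
      Sem α ar (tyOfArity n)
  | 0, F => F Fin.elim0
  | n + 1, F => fun L => mkConst n (fun v => F (Fin.cons L v))

/-- Extension of a semantic environment by one value. -/
def consEnv {α : Type} {ar : α → Nat} {Γ : List STy} {κ₁ : STy}
    (d : Sem α ar κ₁) (ρ : ∀ κ', Lk Γ κ' → Sem α ar κ') :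
    ∀ κ', Lk (κ₁ :: Γ) κ' → Sem α ar κ'
  | _, .hd => d
  | _, .tl y => ρ _ y

/-- Interpretation of λY-terms: choice as union, Y as least (pre)fixed point
    (Knaster–Tarski), tree constructors as pointwise image functions. -/
noncomputable def interp {α : Type} {ar : α → Nat} :
    ∀ {Γ κ}, LTm α ar Γ κ → (∀ κ', Lk Γ κ' → Sem α ar κ') → Sem α ar κ
  | _, _, .var x, ρ => ρ _ x
  | _, _, .lam b, ρ => fun d => interp b (consEnv d ρ)
  | _, _, .app s t, ρ => interp s ρ (interp t ρ)
  | _, _, .cht, _ => fun x y => x ⊔ y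
  | _, _, .fix, _ => fun f => sInf {x | f x ≤ x}
  | _, _, .cst a, _ => mkConst (ar a)
      (fun v => {π | ∃ g, (∀ i, g i ∈ v i) ∧ π = .mk a g})

/-!
Soundness (`⊇`): reduction can only shrink denotations, and a tree belongs to its own denotation.
Since `Sem` contains all functions, not only monotone ones, "shrink" is measured by the logical
relation `SemLE` generated by inclusion at base sort; every closed denotation is `SemLE`-related to
itself, which is what the β- and Y-steps need.

Adequacy (`⊆`): the logical relation `Reach`, which at base sort says that every tree of the
denotation is reachable from the term, holds between the denotation of any term and any closing
substitution by related terms. For `Y` this is a least-prefixed-point argument: the join of all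
denotations related to `Y f` is again related to `Y f`, hence a prefixed point of `⟦f⟧`.
-/

namespace LTm
variable {α : Type} {ar : α → Nat}

theorem rename_rename {Γ Δ Θ : List STy} {κ} (t : LTm α ar Γ κ)
    {f : ∀ {κ}, Lk Γ κ → Lk Δ κ} {g : ∀ {κ}, Lk Δ κ → Lk Θ κ} {h : ∀ {κ}, Lk Γ κ → Lk Θ κ}
    (hfg : ∀ κ (x : Lk Γ κ), g (f x) = h x) :
    (t.rename f).rename g = t.rename h := by
  induction t generalizing Δ Θ with
  | var x => exact congrArg var (hfg _ x)
  | lam b ih =>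
      exact congrArg lam (ih fun _ x => by cases x <;> simp [extR, hfg])
  | app s u ihs ihu => exact congrArg₂ app (ihs hfg) (ihu hfg)
  | cht | fix | cst a => rfl

theorem subs_rename {Γ Δ Θ : List STy} {κ} (t : LTm α ar Γ κ)
    {f : ∀ {κ}, Lk Γ κ → Lk Δ κ} {σ : ∀ {κ}, Lk Δ κ → LTm α ar Θ κ}
    {τ : ∀ {κ}, Lk Γ κ → LTm α ar Θ κ}
    (hfσ : ∀ κ (x : Lk Γ κ), σ (f x) = τ x) :
    (t.rename f).subs σ = t.subs τ := by
  induction t generalizing Δ Θ with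
  | var x => exact hfσ _ x
  | lam b ih =>
      exact congrArg lam (ih fun _ x => by cases x <;> simp [extR, extS, hfσ])
  | app s u ihs ihu => exact congrArg₂ app (ihs hfσ) (ihu hfσ)
  | cht | fix | cst a => rfl

theorem rename_subs {Γ Δ Θ : List STy} {κ} (t : LTm α ar Γ κ)
    {σ : ∀ {κ}, Lk Γ κ → LTm α ar Δ κ} {g : ∀ {κ}, Lk Δ κ → Lk Θ κ}
    {τ : ∀ {κ}, Lk Γ κ → LTm α ar Θ κ}
    (hσg : ∀ κ (x : Lk Γ κ), (σ x).rename g = τ x) :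
    (t.subs σ).rename g = t.subs τ := by
  induction t generalizing Δ Θ with
  | var x => exact hσg _ x
  | lam b ih =>
      refine congrArg lam (ih fun _ x => ?_)
      cases x with
      | hd => rfl
      | tl y =>
          simp only [extS, ← hσg _ y]
          rw [rename_rename (σ y) (h := fun x => (g x).tl) fun _ _ => rfl,
            rename_rename (σ y) fun _ _ => rfl]
          rfl
  | app s u ihs ihu => exact congrArg₂ app (ihs hσg) (ihu hσg)
  | cht | fix | cst a => rfl

theorem subs_subs {Γ Δ Θ : List STy} {κ} (t : LTm α ar Γ κ)
    {σ : ∀ {κ}, Lk Γ κ → LTm α ar Δ κ} {τ : ∀ {κ}, Lk Δ κ → LTm α ar Θ κ}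
    {θ : ∀ {κ}, Lk Γ κ → LTm α ar Θ κ}
    (hστ : ∀ κ (x : Lk Γ κ), (σ x).subs τ = θ x) :
    (t.subs σ).subs τ = t.subs θ := by
  induction t generalizing Δ Θ with
  | var x => exact hστ _ x
  | lam b ih =>
      refine congrArg lam (ih fun _ x => ?_)
      cases x with
      | hd => rfl
      | tl y =>
          simp only [extS, ← hστ _ y]
          exact (subs_rename _ fun _ _ => rfl).trans (rename_subs _ fun _ _ => rfl).symm
  | app s u ihs ihu => exact congrArg₂ app (ihs hστ) (ihu hστ)
  | cht | fix | cst a => rfl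

theorem subs_eq_self {Γ κ} (t : LTm α ar Γ κ) {σ : ∀ {κ}, Lk Γ κ → LTm α ar Γ κ}
    (hσ : ∀ κ (x : Lk Γ κ), σ x = var x) : t.subs σ = t := by
  induction t with
  | var x => exact hσ _ x
  | lam b ih => exact congrArg lam (ih fun _ x => by cases x <;> simp [extS, hσ, rename])
  | app s u ihs ihu => exact congrArg₂ app (ihs hσ) (ihu hσ)
  | cht | fix | cst a => rfl

theorem subs_closed {κ} (t : LTm α ar [] κ) (σ : ∀ {κ}, Lk [] κ → LTm α ar [] κ) :
    t.subs σ = t :=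
  t.subs_eq_self fun _ x => nomatch x

def consSubst {Γ Δ κ₁} (u : LTm α ar Δ κ₁) (σ : ∀ {κ}, Lk Γ κ → LTm α ar Δ κ) :
    ∀ {κ}, Lk (κ₁ :: Γ) κ → LTm α ar Δ κ
  | _, .hd => u
  | _, .tl y => σ y

theorem subst1_subs_extS {Γ Δ κ₁ κ₂} (u : LTm α ar Δ κ₁) (σ : ∀ {κ}, Lk Γ κ → LTm α ar Δ κ)
    (b : LTm α ar (κ₁ :: Γ) κ₂) :
    subst1 u (b.subs (extS σ)) = b.subs (consSubst u σ) :=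
  subs_subs b fun _ x => by
    cases x with
    | hd => rfl
    | tl y => exact (subs_rename _ fun _ _ => rfl).trans (subs_eq_self _ fun _ _ => rfl)

end LTm

section Adequacy

variable {α : Type} {ar : α → Nat}

theorem interp_rename {Γ Δ κ} (t : LTm α ar Γ κ) {f : ∀ {κ}, Lk Γ κ → Lk Δ κ}
    {ρ : ∀ κ, Lk Γ κ → Sem α ar κ} {ρ' : ∀ κ, Lk Δ κ → Sem α ar κ}
    (hρ : ∀ κ (x : Lk Γ κ), ρ' κ (f x) = ρ κ x) :
    interp (t.rename f) ρ' = interp t ρ := by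
  induction t generalizing Δ with
  | var x => exact hρ _ x
  | lam b ih => exact funext fun d => ih fun _ x => by cases x <;> simp [extR, consEnv, hρ]
  | app s u ihs ihu => exact congr (ihs hρ) (ihu hρ)
  | cht | fix | cst a => rfl

theorem interp_subs {Γ Δ κ} (t : LTm α ar Γ κ) {σ : ∀ {κ}, Lk Γ κ → LTm α ar Δ κ}
    {ρ : ∀ κ, Lk Γ κ → Sem α ar κ} {ρ' : ∀ κ, Lk Δ κ → Sem α ar κ}
    (hρ : ∀ κ (x : Lk Γ κ), interp (σ x) ρ' = ρ κ x) :
    interp (t.subs σ) ρ' = interp t ρ := by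
  induction t generalizing Δ with
  | var x => exact hρ _ x
  | lam b ih =>
      refine funext fun d => ih fun _ x => ?_
      cases x with
      | hd => rfl
      | tl y => exact (interp_rename _ fun _ _ => rfl).trans (hρ _ y)
  | app s u ihs ihu => exact congr (ihs hρ) (ihu hρ)
  | cht | fix | cst a => rfl

theorem interp_subst1 {Γ κ₁ κ₂} (u : LTm α ar Γ κ₁) (b : LTm α ar (κ₁ :: Γ) κ₂)
    (ρ : ∀ κ, Lk Γ κ → Sem α ar κ) :
    interp (subst1 u b) ρ = interp b (consEnv (interp u ρ) ρ) :=
  interp_subs b fun _ x => by cases x <;> rfl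

theorem Sem.sSup_apply {κ₁ κ₂} (S : Set (Sem α ar (.arr κ₁ κ₂))) (x : Sem α ar κ₁) :
    sSup S x = sSup ((· x) '' S) :=
  _root_.sSup_apply.trans (sSup_image' (s := S) (f := fun d : Sem α ar (.arr κ₁ κ₂) => d x)).symm

theorem Sem.sInf_apply {κ₁ κ₂} (S : Set (Sem α ar (.arr κ₁ κ₂))) (x : Sem α ar κ₁) :
    sInf S x = sInf ((· x) '' S) :=
  _root_.sInf_apply.trans (sInf_image' (s := S) (f := fun d : Sem α ar (.arr κ₁ κ₂) => d x)).symm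

def SemLE : ∀ κ, Sem α ar κ → Sem α ar κ → Prop
  | .o, d, e => d ≤ e
  | .arr κ₁ κ₂, f, g => ∀ x y, SemLE κ₁ x y → SemLE κ₂ (f x) (g y)

theorem semLE_of_le_of_semLE : ∀ {κ} {d' d e : Sem α ar κ}, d' ≤ d → SemLE κ d e → SemLE κ d' e
  | .o, _, _, _, hd, h => le_trans hd h
  | .arr _ _, _, _, _, hd, h => fun x y hxy => semLE_of_le_of_semLE (hd x) (h x y hxy)

theorem semLE_of_semLE_of_le : ∀ {κ} {d e e' : Sem α ar κ}, SemLE κ d e → e ≤ e' → SemLE κ d e'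
  | .o, _, _, _, h, he => le_trans h he
  | .arr _ _, _, _, _, h, he => fun x y hxy => semLE_of_semLE_of_le (h x y hxy) (he y)

theorem sSup_semLE : ∀ {κ} {S : Set (Sem α ar κ)} {e : Sem α ar κ},
    (∀ d ∈ S, SemLE κ d e) → SemLE κ (sSup S) e
  | .o, _, _, h => sSup_le h
  | .arr _ _, S, _, h => fun x y hxy => by
      rw [Sem.sSup_apply]
      exact sSup_semLE (by rintro _ ⟨d, hd, rfl⟩; exact h d hd x y hxy)

theorem semLE_sInf : ∀ {κ} {d : Sem α ar κ} {S : Set (Sem α ar κ)},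
    (∀ e ∈ S, SemLE κ d e) → SemLE κ d (sInf S)
  | .o, _, _, h => le_sInf h
  | .arr _ _, _, S, h => fun x y hxy => by
      rw [Sem.sInf_apply]
      exact semLE_sInf (by rintro _ ⟨e, he, rfl⟩; exact h e he x y hxy)

theorem sup_semLE_sup : ∀ {κ} {d d' e e' : Sem α ar κ},
    SemLE κ d e → SemLE κ d' e' → SemLE κ (d ⊔ d') (e ⊔ e')
  | .o, _, _, _, _, h, h' => sup_le_sup h h'
  | .arr _ _, _, _, _, _, h, h' => fun x y hxy => sup_semLE_sup (h x y hxy) (h' x y hxy)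

theorem mkConst_semLE_mkConst : ∀ (n) {F G : (Fin n → Set (GTree α ar)) → Set (GTree α ar)},
    (∀ v w, (∀ i, v i ≤ w i) → F v ≤ G w) → SemLE (tyOfArity n) (mkConst n F) (mkConst n G)
  | 0, _, _, h => h _ _ fun i => i.elim0
  | n + 1, _, _, h => fun _ _ hxy =>
      mkConst_semLE_mkConst n fun _ _ hvw => h _ _ (Fin.cases hxy hvw)

/-- The join `z` of all `x` with `SemLE κ x y` is a prefixed point of `F`: `F z` is `SemLE`-below
`G y ≤ y`. -/
theorem sInf_prefixedPoints_semLE {κ} {F G : Sem α ar (.arr κ κ)} (hFG : SemLE (.arr κ κ) F G)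
    {y : Sem α ar κ} (hy : G y ≤ y) : SemLE κ (sInf {x | F x ≤ x}) y := by
  have hz : SemLE κ (sSup {x | SemLE κ x y}) y := sSup_semLE fun _ hx => hx
  have hFz : F (sSup {x | SemLE κ x y}) ≤ sSup {x | SemLE κ x y} :=
    le_sSup (semLE_of_semLE_of_le (hFG _ _ hz) hy)
  exact semLE_of_le_of_semLE (sInf_le hFz) hz

theorem interp_semLE_interp {Γ κ} (t : LTm α ar Γ κ) {ρ ρ' : ∀ κ, Lk Γ κ → Sem α ar κ}
    (hρ : ∀ κ x, SemLE κ (ρ κ x) (ρ' κ x)) : SemLE κ (interp t ρ) (interp t ρ') := by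
  induction t with
  | var x => exact hρ _ x
  | lam b ih => exact fun _ _ hxy => ih fun _ x => by cases x with
      | hd => exact hxy
      | tl y => exact hρ _ y
  | app s u ihs ihu => exact ihs hρ _ _ (ihu hρ)
  | cht => exact fun _ _ hx _ _ hy => sup_semLE_sup hx hy
  | fix => exact fun _ _ hFG => semLE_sInf fun _ hy => sInf_prefixedPoints_semLE hFG hy
  | cst a =>
      refine mkConst_semLE_mkConst _ ?_
      rintro v w hvw _ ⟨g, hg, rfl⟩
      exact ⟨g, fun i => hvw i (hg i), rfl⟩

theorem semLE_interp_self {κ} (t : LTm α ar [] κ) (ρ : ∀ κ, Lk [] κ → Sem α ar κ) :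
    SemLE κ (interp t ρ) (interp t ρ) :=
  interp_semLE_interp t fun _ x => nomatch x

theorem LRed.semLE_interp {κ} {s s' : LTm α ar [] κ} (h : LRed s s')
    (ρ : ∀ κ, Lk [] κ → Sem α ar κ) : SemLE κ (interp s' ρ) (interp s ρ) := by
  induction h with
  | @beta _ _ b u =>
      rw [interp_subst1]
      exact interp_semLE_interp b fun _ x => by cases x with
        | hd => exact semLE_interp_self u ρ
        | tl y => nomatch y
  | @fixR _ f =>
      have hf := semLE_interp_self f ρ
      refine semLE_sInf fun y hy => semLE_of_semLE_of_le (hf _ _ ?_) hy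
      exact sInf_prefixedPoints_semLE hf hy
  | @chL _ s _ => exact semLE_of_semLE_of_le (semLE_interp_self s ρ) le_sup_left
  | @chR _ _ u => exact semLE_of_semLE_of_le (semLE_interp_self u ρ) le_sup_right
  | @appL _ _ _ _ u _ ih => exact ih _ _ (semLE_interp_self u ρ)
  | @appR _ _ s _ _ _ _ ih => exact semLE_interp_self s ρ _ _ ih

theorem LRedStar.interp_le {s s' : LTm α ar [] .o} (h : LRedStar s s')
    (ρ : ∀ κ, Lk [] κ → Sem α ar κ) : interp s' ρ ≤ interp s ρ := by
  induction h with
  | refl => exact le_rfl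
  | tail _ hred ih => exact le_trans (hred.semLE_interp ρ) ih

instance : Membership (GTree α ar) (Sem α ar .o) :=
  inferInstanceAs (Membership (GTree α ar) (Set (GTree α ar)))

theorem interp_appN {ρ : ∀ κ, Lk [] κ → Sem α ar κ} :
    ∀ (n) {F : (Fin n → Set (GTree α ar)) → Set (GTree α ar)} {s : LTm α ar [] (tyOfArity n)},
    interp s ρ = mkConst n F →
    ∀ us : Fin n → LTm α ar [] .o, interp (appN n s us) ρ = F fun i => interp (us i) ρ
  | 0, F, _, hs, _ => hs.trans (congrArg F (funext fun i => i.elim0))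
  | n + 1, F, s, hs, us => by
      refine (interp_appN n (F := fun v => F (Fin.cons (interp (us 0) ρ) v)) (s := .app s (us 0))
        (congrFun hs (interp (us 0) ρ)) fun i => us i.succ).trans ?_
      exact congrArg F (funext fun i => Fin.cases rfl (fun _ => rfl) i)

theorem GTree.mem_interp_toTm (ρ : ∀ κ, Lk [] κ → Sem α ar κ) :
    ∀ π : GTree α ar, π ∈ interp π.toTm ρ
  | .mk a g => by
      show _ ∈ interp (appN (ar a) (.cst a) fun i => (g i).toTm) ρ
      rw [interp_appN (ar a) rfl]
      exact ⟨g, fun i => mem_interp_toTm ρ (g i), rfl⟩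

theorem LRed.appN_head : ∀ (n) {s s' : LTm α ar [] (tyOfArity n)} (us : Fin n → LTm α ar [] .o),
    LRed s s' → LRed (appN n s us) (appN n s' us)
  | 0, _, _, _, h => h
  | n + 1, _, _, us, h => LRed.appN_head n (fun i => us i.succ) h.appL

theorem LRedStar.appN_head (n) {s s' : LTm α ar [] (tyOfArity n)} (us : Fin n → LTm α ar [] .o)
    (h : LRedStar s s') : LRedStar (appN n s us) (appN n s' us) :=
  h.lift _ fun _ _ h => LRed.appN_head n us h

theorem LRedStar.appN_args : ∀ (n) {s : LTm α ar [] (tyOfArity n)}, ConstHead s →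
    ∀ {us vs : Fin n → LTm α ar [] .o}, (∀ i, LRedStar (us i) (vs i)) →
    LRedStar (appN n s us) (appN n s vs)
  | 0, _, _, _, _, _ => .refl
  | n + 1, s, hs, us, vs, h => by
      have h0 : LRedStar (.app s (us 0)) (.app s (vs 0)) :=
        (h 0).lift _ fun _ _ h => LRed.appR hs h
      exact (LRedStar.appN_head n _ h0).trans (LRedStar.appN_args n hs.app fun i => h i.succ)

def Reach : ∀ κ, Sem α ar κ → LTm α ar [] κ → Prop
  | .o, d, t => ∀ π ∈ d, LRedStar t π.toTm
  | .arr κ₁ κ₂, f, s => ∀ d u, Reach κ₁ d u → Reach κ₂ (f d) (.app s u)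

theorem Reach.of_le : ∀ {κ} {d' d : Sem α ar κ} {t}, d' ≤ d → Reach κ d t → Reach κ d' t
  | .o, _, _, _, hd, h => fun π hπ => h π (hd hπ)
  | .arr _ _, _, _, _, hd, h => fun e u heu => Reach.of_le (hd e) (h e u heu)

theorem Reach.sSup : ∀ {κ} {S : Set (Sem α ar κ)} {t}, (∀ d ∈ S, Reach κ d t) → Reach κ (sSup S) t
  | .o, _, _, h => fun π ⟨d, hd, hπ⟩ => h d hd π hπ
  | .arr _ _, S, _, h => fun e u heu => by
      rw [Sem.sSup_apply]
      exact Reach.sSup (by rintro _ ⟨d, hd, rfl⟩; exact h d hd e u heu)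

theorem Reach.sup : ∀ {κ} {d d' : Sem α ar κ} {t}, Reach κ d t → Reach κ d' t → Reach κ (d ⊔ d') t
  | .o, _, _, _, h, h' => fun π hπ => hπ.elim (h π) (h' π)
  | .arr _ _, _, _, _, h, h' => fun e u heu => (h e u heu).sup (h' e u heu)

theorem Reach.of_lRed : ∀ {κ} {d : Sem α ar κ} {t t'}, LRed t t' → Reach κ d t' → Reach κ d t
  | .o, _, _, _, hr, h => fun π hπ => (h π hπ).head hr
  | .arr _ _, _, _, _, hr, h => fun e u heu => Reach.of_lRed hr.appL (h e u heu)

theorem reach_mkConst : ∀ (n) {F : (Fin n → Set (GTree α ar)) → Set (GTree α ar)}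
    {s : LTm α ar [] (tyOfArity n)},
    (∀ v us, (∀ i, Reach .o (v i) (us i)) → ∀ π ∈ F v, LRedStar (appN n s us) π.toTm) →
    Reach (tyOfArity n) (mkConst n F) s
  | 0, _, _, h => h Fin.elim0 Fin.elim0 fun i => i.elim0
  | n + 1, _, _, h => fun d u hdu =>
      reach_mkConst n fun v us hus => h (Fin.cons d v) (Fin.cons u us) (Fin.cases hdu hus)

theorem reach_interp {Γ κ} (t : LTm α ar Γ κ) {σ : ∀ {κ}, Lk Γ κ → LTm α ar [] κ}
    {ρ : ∀ κ, Lk Γ κ → Sem α ar κ} (hσ : ∀ κ x, Reach κ (ρ κ x) (σ x)) :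
    Reach κ (interp t ρ) (t.subs σ) := by
  induction t with
  | var x => exact hσ _ x
  | lam b ih =>
      refine fun d u hdu => Reach.of_lRed .beta ?_
      rw [LTm.subst1_subs_extS]
      exact ih fun _ x => by cases x with
        | hd => exact hdu
        | tl y => exact hσ _ y
  | app s u ihs ihu => exact ihs hσ _ _ (ihu hσ)
  | cht => exact fun _ _ h _ _ h' => (Reach.of_lRed .chL h).sup (Reach.of_lRed .chR h')
  | fix =>
      intro F s hF
      have hz : Reach _ (sSup {d | Reach _ d (.app .fix s)}) (.app .fix s) :=
        Reach.sSup fun _ hd => hd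
      have hFz : Reach _ (F (sSup {d | Reach _ d (.app .fix s)})) (.app .fix s) :=
        Reach.of_lRed .fixR (hF _ _ hz)
      exact hz.of_le (sInf_le (le_sSup hFz))
  | cst a =>
      refine reach_mkConst _ fun v us hus _ ⟨g, hg, hπ⟩ => hπ ▸ ?_
      exact LRedStar.appN_args _ .cst fun i => hus i _ (hg i)

end Adequacy

/-- Adequacy of the Hoare powerdomain semantics: for every closed term of base
    sort, its denotation is exactly the set of trees it can reduce to. -/
theorem stmt10 {α : Type} {ar : α → Nat} (t : LTm α ar [] .o) :
    interp t (fun _ x => nomatch x) = {π : GTree α ar | LRedStar t π.toTm} := by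
  have hreach : Reach .o (interp t (fun _ x => nomatch x)) t := by
    simpa only [LTm.subs_closed] using
      reach_interp t (σ := fun x => nomatch x) fun _ x => nomatch x
  refine Set.Subset.antisymm hreach fun π hπ => ?_
  exact LRedStar.interp_le hπ _ (π.mem_interp_toTm _)
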